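/- arXiv:2405.07210 — 13 statements merged into one kernel-verified Lean document; each statement's English description precedes it below -/
import Mathlib

section
/- Let n ∈ ℕ and let B, C, X, Z be n×n complex matrices such that X² + B·X + C = 0 and Z² + B·Z + C = 0. Then for every λ ∈ ℂ such that λ²·1 + λ·B + C, λ·1 − X, and λ·1 − Z are all invertible, one has (λ²·1 + λ·B + C)⁻¹·(X − Z) = (λ·1 − X)⁻¹·(X − Z)·(λ·1 − Z)⁻¹. -/
/-- For right solvents `X`, `Z` and `λ` with `λ²·1 + λ·B + C`, `λ·1 − X`,
`λ·1 − Z` all invertible: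
`(λ²·1 + λ·B + C)⁻¹·(X − Z) = (λ·1 − X)⁻¹·(X − Z)·(λ·1 − Z)⁻¹`. -/
theorem resolvent_mul_diff_eq (n : ℕ) (B C X Z : Matrix (Fin n) (Fin n) ℂ)
    (hX : X ^ 2 + B * X + C = 0) (hZ : Z ^ 2 + B * Z + C = 0) :
    ∀ lam : ℂ,
      IsUnit ((lam ^ 2) • (1 : Matrix (Fin n) (Fin n) ℂ) + lam • B + C) →
      IsUnit (lam • (1 : Matrix (Fin n) (Fin n) ℂ) - X) →
      IsUnit (lam • (1 : Matrix (Fin n) (Fin n) ℂ) - Z) →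
      ((lam ^ 2) • (1 : Matrix (Fin n) (Fin n) ℂ) + lam • B + C)⁻¹ * (X - Z) =
        (lam • (1 : Matrix (Fin n) (Fin n) ℂ) - X)⁻¹ * (X - Z) *
          (lam • (1 : Matrix (Fin n) (Fin n) ℂ) - Z)⁻¹ := by
  intro lam hL hXu hZu
  set A : Matrix (Fin n) (Fin n) ℂ := lam • 1 with hA
  set P : Matrix (Fin n) (Fin n) ℂ := A + X + B with hP
  have hCX : X ^ 2 + B * X = -C := eq_neg_of_add_eq_zero_left hX
  have hCZ : Z ^ 2 + B * Z = -C := eq_neg_of_add_eq_zero_left hZ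
  have hfact : (lam ^ 2) • (1 : Matrix (Fin n) (Fin n) ℂ) + lam • B + C = P * (A - X) := by
    have h2 : P * (A - X) - ((lam ^ 2) • (1 : Matrix (Fin n) (Fin n) ℂ) + lam • B + C)
        = -(X ^ 2 + B * X) - C := by
      simp only [hP, hA, mul_sub, sub_mul, add_mul, smul_mul_assoc, mul_smul_comm,
        one_mul, mul_one, pow_two, smul_smul]
      module
    rw [hCX, neg_neg, sub_self, sub_eq_zero] at h2
    exact h2.symm
  have hkey : P * (X - Z) = (X - Z) * (A - Z) := by
    have h1 : X ^ 2 + B * X = Z ^ 2 + B * Z := by rw [hCX, hCZ]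
    have h2 : P * (X - Z) - (X - Z) * (A - Z)
        = (X ^ 2 + B * X) - (Z ^ 2 + B * Z) := by
      simp only [hP, hA, mul_sub, sub_mul, add_mul, smul_mul_assoc, mul_smul_comm,
        one_mul, mul_one, pow_two]
      module
    rw [h1, sub_self] at h2
    exact sub_eq_zero.mp h2
  have hLd : IsUnit ((lam ^ 2) • (1 : Matrix (Fin n) (Fin n) ℂ) + lam • B + C).det :=
    (Matrix.isUnit_iff_isUnit_det _).mp hL
  have hXd : IsUnit (A - X).det := (Matrix.isUnit_iff_isUnit_det _).mp hXu
  have hZd : IsUnit (A - Z).det := (Matrix.isUnit_iff_isUnit_det _).mp hZu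
  have hPd : IsUnit P.det := by
    have := hLd
    rw [hfact, Matrix.det_mul] at this
    exact isUnit_of_mul_isUnit_left this
  rw [hfact, Matrix.mul_inv_rev, mul_assoc, mul_assoc]
  congr 1
  calc P⁻¹ * (X - Z) = P⁻¹ * ((X - Z) * (A - Z) * (A - Z)⁻¹) := by
        rw [Matrix.mul_nonsing_inv_cancel_right _ _ hZd]
    _ = P⁻¹ * (P * (X - Z)) * (A - Z)⁻¹ := by rw [← hkey]; simp only [mul_assoc]
    _ = (X - Z) * (A - Z)⁻¹ := by rw [Matrix.nonsing_inv_mul_cancel_left _ _ hPd]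
end

section
/- Let n ∈ ℕ and let B, C, X, Z be n×n complex matrices such that X² + B·X + C = 0 and Z² + B·Z + C = 0. Then for every λ ∈ ℂ such that λ²·1 + λ·B + C, λ·1 − X, and λ·1 − Z are all invertible, one has (λ²·1 + λ·B + C)⁻¹·(X − Z) = (λ·1 − X)⁻¹ − (λ·1 − Z)⁻¹. -/
/-! A right solvent `X` factors the pencil as `L(λ) = (λ·1 + X + B)(λ·1 − X)`, so
`L(λ)(λ·1 − X)⁻¹ = λ·1 + X + B`. Subtracting the same identity for `Z` leaves
`L(λ)((λ·1 − X)⁻¹ − (λ·1 − Z)⁻¹) = X − Z`. -/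

theorem quadratic_pencil_eq_mul_of_solvent {K A : Type*} [CommRing K] [Ring A] [Algebra K A]
    {b c x : A} (hx : x ^ 2 + b * x + c = 0) (a : K) :
    a ^ 2 • (1 : A) + a • b + c = (a • 1 + x + b) * (a • 1 - x) := by
  simp only [Algebra.smul_def, mul_one, map_pow]
  linear_combination (norm := noncomm_ring) hx + Algebra.commutes a x + Algebra.commutes a b

namespace Matrix

variable {ι K : Type*} [Fintype ι] [DecidableEq ι] [CommRing K] {B C X : Matrix ι ι K}

theorem quadratic_pencil_mul_resolvent_of_solvent (hX : X ^ 2 + B * X + C = 0) {a : K}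
    (ha : IsUnit (a • 1 - X).det) :
    (a ^ 2 • 1 + a • B + C) * (a • 1 - X)⁻¹ = a • 1 + X + B := by
  rw [quadratic_pencil_eq_mul_of_solvent hX, mul_nonsing_inv_cancel_right _ _ ha]

end Matrix

open Matrix in
/-- For right solvents `X`, `Z` and `λ` with `λ²·1 + λ·B + C`, `λ·1 − X`,
`λ·1 − Z` all invertible:
`(λ²·1 + λ·B + C)⁻¹·(X − Z) = (λ·1 − X)⁻¹ − (λ·1 − Z)⁻¹`. -/
theorem resolvent_mul_diff_eq_sub_resolvents (n : ℕ) (B C X Z : Matrix (Fin n) (Fin n) ℂ)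
    (hX : X ^ 2 + B * X + C = 0) (hZ : Z ^ 2 + B * Z + C = 0) :
    ∀ lam : ℂ,
      IsUnit ((lam ^ 2) • (1 : Matrix (Fin n) (Fin n) ℂ) + lam • B + C) →
      IsUnit (lam • (1 : Matrix (Fin n) (Fin n) ℂ) - X) →
      IsUnit (lam • (1 : Matrix (Fin n) (Fin n) ℂ) - Z) →
      ((lam ^ 2) • (1 : Matrix (Fin n) (Fin n) ℂ) + lam • B + C)⁻¹ * (X - Z) =
        (lam • (1 : Matrix (Fin n) (Fin n) ℂ) - X)⁻¹ -
          (lam • (1 : Matrix (Fin n) (Fin n) ℂ) - Z)⁻¹ := by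
  intro lam hL hMX hMZ
  rw [isUnit_iff_isUnit_det] at hL hMX hMZ
  have hpencil : (lam ^ 2 • 1 + lam • B + C) * ((lam • 1 - X)⁻¹ - (lam • 1 - Z)⁻¹) = X - Z := by
    rw [Matrix.mul_sub, quadratic_pencil_mul_resolvent_of_solvent hX hMX,
      quadratic_pencil_mul_resolvent_of_solvent hZ hMZ]
    abel
  rw [← hpencil, nonsing_inv_mul_cancel_left _ _ hL]
end

section
/- Let n ∈ ℕ and let B, C, X, Z be n×n complex matrices such that X² + B·X + C = 0, Z² + B·Z + C = 0, and X − Z is invertible. Then for every λ ∈ ℂ one has λ²·1 + λ·B + C = (X − Z)·(λ·1 − X)·(X − Z)⁻¹·(λ·1 − Z). -/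
/-!
Subtracting the two solvent equations gives `(X - Z) X + (B + Z)(X - Z) = 0`, i.e. `X - Z`
intertwines `λ - X` with `λ + B + Z`. Hence `(X - Z)(λ - X)(X - Z)⁻¹ = λ + B + Z`, and
`(λ + B + Z)(λ - Z) = L(λ)` is the right division of `L` by `λ - Z`, exact because `Z` is a
right solvent.
-/

section

variable {R A : Type*} [CommRing R] [Ring A] [Algebra R A]

theorem sub_mul_smul_one_sub_of_solvents {B C X Z : A}
    (hX : X ^ 2 + B * X + C = 0) (hZ : Z ^ 2 + B * Z + C = 0) (lam : R) :
    (X - Z) * (lam • (1 : A) - X) = (lam • (1 : A) + B + Z) * (X - Z) := by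
  rw [← sub_eq_zero]
  calc _ = (Z ^ 2 + B * Z + C) - (X ^ 2 + B * X + C) := by noncomm_ring; module
    _ = 0 := by rw [hX, hZ, sub_zero]

theorem smul_one_add_add_mul_smul_one_sub_of_solvent {B C Z : A}
    (hZ : Z ^ 2 + B * Z + C = 0) (lam : R) :
    (lam • (1 : A) + B + Z) * (lam • (1 : A) - Z) = lam ^ 2 • (1 : A) + lam • B + C := by
  rw [← sub_eq_zero]
  calc _ = -(Z ^ 2 + B * Z + C) := by noncomm_ring; module
    _ = 0 := by rw [hZ, neg_zero]

end

/-- If `X`, `Z` form a complete pair of right solvents, then for every `λ ∈ ℂ`,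
`λ²·1 + λ·B + C = (X − Z)·(λ·1 − X)·(X − Z)⁻¹·(λ·1 − Z)`. -/
theorem pencil_factor_of_complete_pair (n : ℕ) (B C X Z : Matrix (Fin n) (Fin n) ℂ)
    (hX : X ^ 2 + B * X + C = 0) (hZ : Z ^ 2 + B * Z + C = 0) (hXZ : IsUnit (X - Z)) :
    ∀ lam : ℂ, (lam ^ 2) • (1 : Matrix (Fin n) (Fin n) ℂ) + lam • B + C =
      (X - Z) * (lam • (1 : Matrix (Fin n) (Fin n) ℂ) - X) * (X - Z)⁻¹ *
        (lam • (1 : Matrix (Fin n) (Fin n) ℂ) - Z) := by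
  intro lam
  rw [sub_mul_smul_one_sub_of_solvents hX hZ lam,
    Matrix.mul_nonsing_inv_cancel_right _ _ ((Matrix.isUnit_iff_isUnit_det _).mp hXZ),
    smul_one_add_add_mul_smul_one_sub_of_solvent hZ lam]
end

section
/- Let n ∈ ℕ and let B, C, X, Z be n×n complex matrices such that X² + B·X + C = 0, Z² + B·Z + C = 0, and X − Z is invertible. Then for every λ ∈ ℂ such that λ·1 − X and λ·1 − Z are both invertible, the matrix λ²·1 + λ·B + C is invertible and (λ²·1 + λ·B + C)⁻¹ = ((λ·1 − X)⁻¹ − (λ·1 − Z)⁻¹)·(X − Z)⁻¹. -/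
/-! A right solvent `X` factors the pencil as `L(λ) = (λ + B + X)(λ - X)`, so
`L(λ) ((λ - X)⁻¹ - (λ - Z)⁻¹) = (λ + B + X) - (λ + B + Z) = X - Z`, and inverting `X - Z`
exhibits a right inverse of `L(λ)`. -/

theorem quadratic_pencil_eq_mul_of_right_solvent {R A : Type*} [CommSemiring R] [Ring A]
    [Algebra R A] {B C X : A} (hX : X ^ 2 + B * X + C = 0) (lam : R) :
    lam ^ 2 • (1 : A) + lam • B + C = (lam • 1 + B + X) * (lam • 1 - X) := by
  simp only [Algebra.smul_def, mul_one, map_pow]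
  linear_combination (norm := noncomm_ring) hX + Algebra.commutes lam X + Algebra.commutes lam B

theorem Matrix.quadratic_pencil_mul_inv_sub_inv {K ι : Type*} [CommRing K] [Fintype ι]
    [DecidableEq ι] {B C X Z : Matrix ι ι K} (hX : X ^ 2 + B * X + C = 0)
    (hZ : Z ^ 2 + B * Z + C = 0) {lam : K} (hlX : IsUnit (lam • 1 - X))
    (hlZ : IsUnit (lam • 1 - Z)) :
    (lam ^ 2 • 1 + lam • B + C) * ((lam • 1 - X)⁻¹ - (lam • 1 - Z)⁻¹) = X - Z := by
  rw [mul_sub]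
  nth_rw 1 [quadratic_pencil_eq_mul_of_right_solvent hX]
  rw [quadratic_pencil_eq_mul_of_right_solvent hZ, mul_assoc, mul_assoc,
    mul_nonsing_inv _ ((isUnit_iff_isUnit_det _).mp hlX),
    mul_nonsing_inv _ ((isUnit_iff_isUnit_det _).mp hlZ), mul_one, mul_one]
  abel

/-- If `X`, `Z` form a complete pair of right solvents, then for every `λ` with
`λ·1 − X` and `λ·1 − Z` invertible, `λ²·1 + λ·B + C` is invertible and
`(λ²·1 + λ·B + C)⁻¹ = ((λ·1 − X)⁻¹ − (λ·1 − Z)⁻¹)·(X − Z)⁻¹`. -/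
theorem pencil_inv_of_complete_pair (n : ℕ) (B C X Z : Matrix (Fin n) (Fin n) ℂ)
    (hX : X ^ 2 + B * X + C = 0) (hZ : Z ^ 2 + B * Z + C = 0) (hXZ : IsUnit (X - Z)) :
    ∀ lam : ℂ,
      IsUnit (lam • (1 : Matrix (Fin n) (Fin n) ℂ) - X) →
      IsUnit (lam • (1 : Matrix (Fin n) (Fin n) ℂ) - Z) →
      IsUnit ((lam ^ 2) • (1 : Matrix (Fin n) (Fin n) ℂ) + lam • B + C) ∧
      ((lam ^ 2) • (1 : Matrix (Fin n) (Fin n) ℂ) + lam • B + C)⁻¹ =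
        ((lam • (1 : Matrix (Fin n) (Fin n) ℂ) - X)⁻¹ -
          (lam • (1 : Matrix (Fin n) (Fin n) ℂ) - Z)⁻¹) * (X - Z)⁻¹ := by
  intro lam hlX hlZ
  have hright : (lam ^ 2 • 1 + lam • B + C) *
      (((lam • 1 - X)⁻¹ - (lam • 1 - Z)⁻¹) * (X - Z)⁻¹) = 1 := by
    rw [← mul_assoc, Matrix.quadratic_pencil_mul_inv_sub_inv hX hZ hlX hlZ,
      Matrix.mul_nonsing_inv _ ((Matrix.isUnit_iff_isUnit_det _).mp hXZ)]
  exact ⟨(Matrix.isUnit_iff_isUnit_det _).mpr (Matrix.isUnit_det_of_right_inverse hright),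
    Matrix.inv_eq_right_inv hright⟩
end

section
/- Let n ∈ ℕ and let B, C, X, Z be n×n complex matrices such that X² + B·X + C = 0, Z² + B·Z + C = 0, and X − Z is invertible. Then the spectrum of the pencil satisfies σ(B,C) = σ(X) ∪ σ(Z); equivalently, for every λ ∈ ℂ, the matrix λ²·1 + λ·B + C is invertible if and only if both λ·1 − X and λ·1 − Z are invertible. -/
/-!
A right solvent `X` splits off a right linear factor:
`λ² + λB + C = (λ + B + X)(λ - X)`. For a second solvent `Z` the left factor satisfies
`(λ + B + X)(X - Z) = (X - Z)(λ - Z)`, so when `X - Z` is invertible it is similar to `λ - Z`.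
In a Dedekind-finite ring (e.g. square matrices) a product is invertible iff both factors are.
-/

theorem isUnit_iff_of_mul_eq_mul_of_isUnit {M : Type*} [Monoid M] {a b u : M} (hu : IsUnit u)
    (h : a * u = u * b) : IsUnit a ↔ IsUnit b := by
  obtain ⟨u, rfl⟩ := hu
  rw [← Units.isUnit_mul_units a u, h, Units.isUnit_units_mul]

section QuadraticPencil

variable {K A : Type*} [CommRing K] [Ring A] [Algebra K A] (lam : K) {B C X Z : A}

theorem quadratic_pencil_eq_mul_of_solvent_s7 (hX : X ^ 2 + B * X + C = 0) :
    lam ^ 2 • (1 : A) + lam • B + C = (lam • 1 + B + X) * (lam • 1 - X) := by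
  rw [eq_neg_of_add_eq_zero_right hX]
  simp only [add_mul, mul_sub, smul_mul_assoc, mul_smul_comm, one_mul, mul_one, sq]
  module

theorem mul_sub_eq_sub_mul_of_solvents (hX : X ^ 2 + B * X + C = 0)
    (hZ : Z ^ 2 + B * Z + C = 0) :
    (lam • 1 + B + X) * (X - Z) = (X - Z) * (lam • 1 - Z) := by
  have heq : X ^ 2 + B * X = Z ^ 2 + B * Z := add_right_cancel (hX.trans hZ.symm)
  simp only [add_mul, mul_sub, sub_mul, smul_mul_assoc, mul_smul_comm, one_mul, mul_one,
    sq] at heq ⊢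
  linear_combination (norm := module) heq

theorem isUnit_quadratic_pencil_iff [IsDedekindFiniteMonoid A] (hX : X ^ 2 + B * X + C = 0)
    (hZ : Z ^ 2 + B * Z + C = 0) (hXZ : IsUnit (X - Z)) :
    IsUnit (lam ^ 2 • (1 : A) + lam • B + C) ↔
      IsUnit (lam • (1 : A) - X) ∧ IsUnit (lam • (1 : A) - Z) := by
  rw [quadratic_pencil_eq_mul_of_solvent_s7 lam hX, IsUnit.mul_iff, and_comm,
    isUnit_iff_of_mul_eq_mul_of_isUnit hXZ (mul_sub_eq_sub_mul_of_solvents lam hX hZ)]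

end QuadraticPencil

/-- If `X`, `Z` form a complete pair of right solvents, then
`σ(B,C) = σ(X) ∪ σ(Z)`; equivalently, for every `λ`, the matrix `λ²·1 + λ·B + C` is
invertible iff both `λ·1 − X` and `λ·1 − Z` are invertible. -/
theorem pencil_spectrum_of_complete_pair (n : ℕ) (B C X Z : Matrix (Fin n) (Fin n) ℂ)
    (hX : X ^ 2 + B * X + C = 0) (hZ : Z ^ 2 + B * Z + C = 0) (hXZ : IsUnit (X - Z)) :
    ∀ lam : ℂ,
      IsUnit ((lam ^ 2) • (1 : Matrix (Fin n) (Fin n) ℂ) + lam • B + C) ↔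
        (IsUnit (lam • (1 : Matrix (Fin n) (Fin n) ℂ) - X) ∧
          IsUnit (lam • (1 : Matrix (Fin n) (Fin n) ℂ) - Z)) :=
  fun lam => isUnit_quadratic_pencil_iff lam hX hZ hXZ
end

section
/- Let n ∈ ℕ and let B, C, X, Z be n×n complex matrices such that X² + B·X + C = 0 and Z² + B·Z + C = 0. If the spectra of X and Z are disjoint, i.e. σ(X) ∩ σ(Z) = ∅, then the matrix X − Z is invertible (so X and Z form a complete pair of right solvents). -/
/-!
Subtracting the two solvent equations gives `(X - Z) Z = -(X + B) (X - Z)`, so the kernel of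
`X - Z` is `Z`-invariant. If `X - Z` were singular, `Z` would have an eigenvector `v` in that
kernel, and then `X v = Z v = μ v` puts `μ` in both spectra.
-/

open Set

theorem sub_mul_eq_neg_mul_sub_of_solvents {R : Type*} [Ring R] {B C X Z : R}
    (hX : X ^ 2 + B * X + C = 0) (hZ : Z ^ 2 + B * Z + C = 0) :
    (X - Z) * Z = -((X + B) * (X - Z)) := by
  rw [eq_neg_iff_add_eq_zero]
  calc (X - Z) * Z + (X + B) * (X - Z) = (X ^ 2 + B * X + C) - (Z ^ 2 + B * Z + C) := by
        noncomm_ring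
    _ = 0 := by rw [hX, hZ, sub_zero]

theorem spectrum_eq_setOf_not_isUnit_smul_one_sub {R A : Type*} [CommSemiring R] [Ring A]
    [Algebra R A] (a : A) : spectrum R a = {r : R | ¬IsUnit (r • (1 : A) - a)} := by
  ext r
  rw [spectrum.mem_iff, Algebra.algebraMap_eq_smul_one]
  rfl

namespace Module.End

variable {K V : Type*} [Field K] [IsAlgClosed K] [AddCommGroup V] [Module K V]
  [FiniteDimensional K V]

theorem exists_hasEigenvector_mem_of_mapsTo {p : Submodule K V} (hp : p ≠ ⊥) {g : End K V}
    (hg : MapsTo g p p) : ∃ μ v, v ∈ p ∧ g.HasEigenvector μ v := by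
  have : Nontrivial p := Submodule.nontrivial_iff_ne_bot.mpr hp
  obtain ⟨μ, hμ⟩ := exists_eigenvalue (g.restrict hg)
  obtain ⟨⟨v, hvp⟩, hv⟩ := hμ.exists_hasEigenvector
  refine ⟨μ, v, hvp, ?_, ?_⟩
  · exact eigenspace_restrict_le_eigenspace g hg μ ⟨_, hv.1, rfl⟩
  · simpa using hv.2

theorem isUnit_sub_of_solvents_of_disjoint_spectrum {b c f g : End K V}
    (hf : f ^ 2 + b * f + c = 0) (hg : g ^ 2 + b * g + c = 0)
    (hdisj : Disjoint (spectrum K f) (spectrum K g)) : IsUnit (f - g) := by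
  by_contra hfg
  have hker : LinearMap.ker (f - g) ≠ ⊥ := fun h =>
    hfg ((LinearMap.isUnit_iff_ker_eq_bot _).mpr h)
  have hmaps : MapsTo g (LinearMap.ker (f - g)) (LinearMap.ker (f - g)) := fun v hv => by
    rw [SetLike.mem_coe, LinearMap.mem_ker, ← mul_apply,
      sub_mul_eq_neg_mul_sub_of_solvents hf hg]
    simp [LinearMap.mem_ker.mp hv]
  obtain ⟨μ, v, hvker, hv⟩ := exists_hasEigenvector_mem_of_mapsTo hker hmaps
  have hfv : f.HasEigenvector μ v := by
    refine ⟨mem_eigenspace_iff.mpr ?_, hv.2⟩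
    rw [← hv.apply_eq_smul, ← sub_eq_zero, ← LinearMap.sub_apply]
    exact hvker
  exact hdisj.ne_of_mem (hasEigenvalue_of_hasEigenvector hfv).mem_spectrum
    (hasEigenvalue_of_hasEigenvector hv).mem_spectrum rfl

end Module.End

theorem Matrix.isUnit_sub_of_solvents_of_disjoint_spectrum {K ι : Type*} [Field K] [IsAlgClosed K]
    [Fintype ι] [DecidableEq ι] {B C X Z : Matrix ι ι K}
    (hX : X ^ 2 + B * X + C = 0) (hZ : Z ^ 2 + B * Z + C = 0)
    (hdisj : Disjoint (spectrum K X) (spectrum K Z)) : IsUnit (X - Z) := by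
  have solvent {Y : Matrix ι ι K} (hY : Y ^ 2 + B * Y + C = 0) :
      Y.toLin' ^ 2 + B.toLin' * Y.toLin' + C.toLin' = 0 := by
    have h := congr_arg Matrix.toLinAlgEquiv' hY
    rw [map_add, map_add, map_mul, map_pow, map_zero] at h
    exact h
  rw [← Matrix.spectrum_toLin', ← Matrix.spectrum_toLin' Z] at hdisj
  rw [← Matrix.isUnit_toLin'_iff, map_sub]
  exact Module.End.isUnit_sub_of_solvents_of_disjoint_spectrum (solvent hX) (solvent hZ) hdisj

/-- If `X`, `Z` are right solvents with disjoint spectra, then `X − Z`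
is invertible, i.e. `X` and `Z` form a complete pair. -/
theorem complete_pair_of_disjoint_spectra (n : ℕ) (B C X Z : Matrix (Fin n) (Fin n) ℂ)
    (hX : X ^ 2 + B * X + C = 0) (hZ : Z ^ 2 + B * Z + C = 0)
    (hdisj : {lam : ℂ | ¬ IsUnit (lam • (1 : Matrix (Fin n) (Fin n) ℂ) - X)} ∩
        {lam : ℂ | ¬ IsUnit (lam • (1 : Matrix (Fin n) (Fin n) ℂ) - Z)} = ∅) :
    IsUnit (X - Z) := by
  rw [← spectrum_eq_setOf_not_isUnit_smul_one_sub, ← spectrum_eq_setOf_not_isUnit_smul_one_sub,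
    ← disjoint_iff_inter_eq_empty] at hdisj
  exact Matrix.isUnit_sub_of_solvents_of_disjoint_spectrum hX hZ hdisj
end

section
/- Let n ∈ ℕ and let B, C, X, Z be n×n complex matrices such that X² + B·X + C = 0, Z² + B·Z + C = 0, and X − Z is invertible. Define U(t) = (exp(t·X) − exp(t·Z))·(X − Z)⁻¹ for t ∈ ℝ. Then U is twice differentiable, U''(t) + B·U'(t) + C·U(t) = 0 for all t ∈ ℝ, U(0) = 0, and U'(0) = 1; moreover U'(t) = (X·exp(t·X) − Z·exp(t·Z))·(X − Z)⁻¹ for all t ∈ ℝ. -/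
/-!
Each `V(t) = exp(tY)` satisfies `V' = Y V`, so `V'' + B V' + C V = (Y² + B Y + C) V`, which
vanishes when `Y` is a right solvent. Right multiplication by the constant `(X - Z)⁻¹` and
subtraction preserve solutions of the linear equation, so `U` is a solution; its initial values
are `U(0) = (1 - 1)(X - Z)⁻¹ = 0` and `U'(0) = (X - Z)(X - Z)⁻¹ = 1`.
-/

open NormedSpace

namespace Matrix

variable {m 𝕜 : Type*} [RCLike 𝕜]

-- `exp` is differentiated in a complete normed algebra, so use the `L^∞` operator norm here;
-- the entries do not see which norm was chosen. This must precede the sup-norm instances below,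
-- which would otherwise compete with the local ones.
theorem hasDerivAt_exp_ofReal_smul_apply [Fintype m] [DecidableEq m] (M : Matrix m m 𝕜)
    (t : ℝ) (i j : m) :
    HasDerivAt (fun s : ℝ => exp ((s : 𝕜) • M) i j)
      ((M * exp ((t : 𝕜) • M)) i j) t := by
  let _ : NormedRing (Matrix m m 𝕜) := Matrix.linftyOpNormedRing
  let _ : NormedAlgebra ℝ (Matrix m m 𝕜) := Matrix.linftyOpNormedAlgebra
  have hexp := hasDerivAt_exp_smul_const' (𝕂 := ℝ) M t
  simp only [RCLike.real_smul_eq_coe_smul (K := 𝕜)] at hexp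
  exact (entryLinearMap ℝ 𝕜 i j).toContinuousLinearMap.hasFDerivAt.comp_hasDerivAt t hexp

end Matrix

attribute [local instance] Matrix.normedAddCommGroup Matrix.normedSpace

namespace Matrix

variable {m 𝕜 : Type*} [RCLike 𝕜]

theorem hasDerivAt_iff_forall_apply {n : Type*} [Fintype n] {f : ℝ → Matrix m n 𝕜}
    {f' : Matrix m n 𝕜} {t : ℝ} :
    HasDerivAt f f' t ↔ ∀ i j, HasDerivAt (fun s => f s i j) (f' i j) t :=
  hasDerivAt_pi.trans <| forall_congr' fun _ => hasDerivAt_pi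

variable [Fintype m]

theorem hasDerivAt_exp_ofReal_smul [DecidableEq m] (M : Matrix m m 𝕜) (t : ℝ) :
    HasDerivAt (fun s : ℝ => exp ((s : 𝕜) • M)) (M * exp ((t : 𝕜) • M)) t :=
  hasDerivAt_iff_forall_apply.2 <| hasDerivAt_exp_ofReal_smul_apply M t

variable {f : ℝ → Matrix m m 𝕜} {f' : Matrix m m 𝕜} {t : ℝ}

theorem _root_.HasDerivAt.matrix_mul_const (hf : HasDerivAt f f' t) (W : Matrix m m 𝕜) :
    HasDerivAt (fun s => f s * W) (f' * W) t :=
  (LinearMap.mulRight ℝ W).toContinuousLinearMap.hasFDerivAt.comp_hasDerivAt t hf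

theorem _root_.HasDerivAt.matrix_const_mul (hf : HasDerivAt f f' t) (W : Matrix m m 𝕜) :
    HasDerivAt (fun s => W * f s) (W * f') t :=
  (LinearMap.mulLeft ℝ W).toContinuousLinearMap.hasFDerivAt.comp_hasDerivAt t hf

end Matrix

theorem mul_mul_add_mul_mul_add_mul_eq_zero {R : Type*} [Ring R] {B C Y : R}
    (hY : Y ^ 2 + B * Y + C = 0) (E : R) : Y * (Y * E) + B * (Y * E) + C * E = 0 := by
  rw [← mul_assoc, ← mul_assoc, ← add_mul, ← add_mul, ← sq, hY, zero_mul]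

/-- If `X`, `Z` form a complete pair of right solvents, then
`U(t) = (exp(tX) − exp(tZ))·(X − Z)⁻¹` is twice differentiable,
`U'' + B·U' + C·U = 0`, `U(0) = 0`, `U'(0) = 1`, and
`U'(t) = (X·exp(tX) − Z·exp(tZ))·(X − Z)⁻¹`. -/
theorem matrixODE_fundamental_solution (n : ℕ) (B C X Z : Matrix (Fin n) (Fin n) ℂ)
    (hX : X ^ 2 + B * X + C = 0) (hZ : Z ^ 2 + B * Z + C = 0) (hXZ : IsUnit (X - Z))
    (U : ℝ → Matrix (Fin n) (Fin n) ℂ)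
    (hU : ∀ t : ℝ, U t =
      (NormedSpace.exp ((t : ℂ) • X) - NormedSpace.exp ((t : ℂ) • Z)) * (X - Z)⁻¹) :
    ∃ U' U'' : ℝ → Matrix (Fin n) (Fin n) ℂ,
      (∀ t : ℝ, HasDerivAt U (U' t) t) ∧
      (∀ t : ℝ, HasDerivAt U' (U'' t) t) ∧
      (∀ t : ℝ, U'' t + B * U' t + C * U t = 0) ∧
      U 0 = 0 ∧ U' 0 = 1 ∧
      (∀ t : ℝ, U' t =
        (X * NormedSpace.exp ((t : ℂ) • X) - Z * NormedSpace.exp ((t : ℂ) • Z)) *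
          (X - Z)⁻¹) := by
  set W := (X - Z)⁻¹
  set E := fun t : ℝ => exp ((t : ℂ) • X)
  set F := fun t : ℝ => exp ((t : ℂ) • Z)
  have hE : ∀ t, HasDerivAt E (X * E t) t := Matrix.hasDerivAt_exp_ofReal_smul X
  have hF : ∀ t, HasDerivAt F (Z * F t) t := Matrix.hasDerivAt_exp_ofReal_smul Z
  obtain rfl : U = fun t => (E t - F t) * W := funext hU
  refine ⟨fun t => (X * E t - Z * F t) * W, fun t => (X * (X * E t) - Z * (Z * F t)) * W,
    fun t => ?_, fun t => ?_, fun t => ?_, ?_, ?_, fun t => rfl⟩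
  · exact ((hE t).fun_sub (hF t)).matrix_mul_const W
  · exact (((hE t).matrix_const_mul X).fun_sub ((hF t).matrix_const_mul Z)).matrix_mul_const W
  · have hXE := mul_mul_add_mul_mul_add_mul_eq_zero hX (E t)
    have hZF := mul_mul_add_mul_mul_add_mul_eq_zero hZ (F t)
    calc _ = (X * (X * E t) + B * (X * E t) + C * E t
              - (Z * (Z * F t) + B * (Z * F t) + C * F t)) * W := by noncomm_ring
      _ = 0 := by rw [hXE, hZF, sub_self, zero_mul]
  · simp [E, F]
  · simpa [E, F] using Matrix.mul_nonsing_inv _ ((Matrix.isUnit_iff_isUnit_det _).mp hXZ)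
end

section
/- Let n ∈ ℕ, let B, C, X, Z be n×n complex matrices such that X² + B·X + C = 0, Z² + B·Z + C = 0, and X − Z is invertible, and let f : ℝ → ℂⁿ be continuous. Define U(t) = (exp(t·X) − exp(t·Z))·(X − Z)⁻¹ and U'(t) = (X·exp(t·X) − Z·exp(t·Z))·(X − Z)⁻¹. Then for any u₀, u₁ ∈ ℂⁿ, the function x(t) = U'(t)·u₀ + U(t)·(u₁ + B·u₀) + ∫₀ᵗ U(t − s)·f(s) ds is twice differentiable and satisfies x''(t) + B·x'(t) + C·x(t) = f(t) for all t ∈ ℝ, together with the initial conditions x(0) = u₀ and x'(0) = u₁. -/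
/-!
Put `P = (X - Z)⁻¹`. The solution splits as `x = y_X - y_Z`, where `y_W` is the Duhamel solution
of `y' = W y + P f` with `y(0) = W P u₀ + P (u₁ + B u₀)`. Because `y_X` and `y_Z` share the forcing
term, `x' = X y_X - Z y_Z` and `x'' = X² y_X - Z² y_Z + (X - Z) P f`, so the solvent equations
`W² + B W + C = 0` collapse `x'' + B x' + C x` to `f`. The initial values come from
`(X - Z) P = 1` and `(X² - Z²) P = -B`.
-/

open NormedSpace

namespace Matrix

variable {m 𝕜 : Type*} [Fintype m] [DecidableEq m] [RCLike 𝕜]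

variable (m 𝕜) in
noncomputable def toCLM' : Matrix m m 𝕜 →ₐ[𝕜] (m → 𝕜) →L[𝕜] (m → 𝕜) :=
  (Module.End.toContinuousLinearMap (m → 𝕜)).toAlgHom.comp toLinAlgEquiv'.toAlgHom

@[simp]
lemma toCLM'_apply (M : Matrix m m 𝕜) (v : m → 𝕜) : toCLM' m 𝕜 M v = M *ᵥ v := rfl

lemma toCLM'_exp (M : Matrix m m 𝕜) : toCLM' m 𝕜 (exp M) = exp (toCLM' m 𝕜 M) := by
  open scoped Norms.Operator in
  exact map_exp (toCLM' m 𝕜) (toCLM' m 𝕜).toLinearMap.continuous_of_finiteDimensional M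

end Matrix

section ExpOfRealSmul

variable {𝔸 : Type*} [NormedRing 𝔸] [NormedAlgebra ℂ 𝔸] [CompleteSpace 𝔸]

lemma hasDerivAt_exp_ofReal_smul (A : 𝔸) (t : ℝ) :
    HasDerivAt (fun s : ℝ => exp ((s : ℂ) • A)) (A * exp ((t : ℂ) • A)) t := by
  simpa [Function.comp_def] using
    (hasDerivAt_exp_smul_const' A (t : ℂ)).scomp t Complex.ofRealCLM.hasDerivAt

lemma continuous_exp_ofReal_smul (A : 𝔸) : Continuous fun t : ℝ => exp ((t : ℂ) • A) :=
  continuous_iff_continuousAt.2 fun t => (hasDerivAt_exp_ofReal_smul A t).continuousAt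

lemma exp_ofReal_sub_smul (A : 𝔸) (t s : ℝ) :
    exp (((t - s : ℝ) : ℂ) • A) = exp ((t : ℂ) • A) * exp (((-s : ℝ) : ℂ) • A) := by
  let : NormedAlgebra ℚ 𝔸 := .restrictScalars ℚ ℂ 𝔸
  rw [sub_eq_add_neg, Complex.ofReal_add, add_smul]
  exact exp_add_of_commute (((Commute.refl A).smul_left _).smul_right _)

lemma exp_ofReal_smul_mul_exp_neg (A : 𝔸) (t : ℝ) :
    exp ((t : ℂ) • A) * exp (((-t : ℝ) : ℂ) • A) = 1 := by
  rw [← exp_ofReal_sub_smul, sub_self, Complex.ofReal_zero, zero_smul, exp_zero]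

end ExpOfRealSmul

lemma HasDerivAt.complexCLM_apply {E F : Type*} [NormedAddCommGroup E] [NormedSpace ℂ E]
    [NormedAddCommGroup F] [NormedSpace ℂ F] {L : ℝ → E →L[ℂ] F} {L' : E →L[ℂ] F}
    {u : ℝ → E} {u' : E} {t : ℝ} (hL : HasDerivAt L L' t) (hu : HasDerivAt u u' t) :
    HasDerivAt (fun s => L s (u s)) (L' (u t) + L t u') t :=
  ((ContinuousLinearMap.restrictScalarsL ℂ E F ℝ ℝ).hasFDerivAt.comp_hasDerivAt t hL).clm_apply hu

lemma apply_exp_smul_apply_comm {E : Type*} [NormedAddCommGroup E] [NormedSpace ℂ E]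
    (A : E →L[ℂ] E) (z : ℂ) (v : E) : A (exp (z • A) v) = exp (z • A) (A v) := by
  rw [← mul_apply_eq_comp, ((Commute.refl A).smul_right z).exp_right.eq, mul_apply_eq_comp]

section Duhamel

variable {E : Type*} [NormedAddCommGroup E] [NormedSpace ℂ E] [CompleteSpace E]
  {A : E →L[ℂ] E} {v : E} {g : ℝ → E}

lemma Continuous.exp_ofReal_smul_apply (A : E →L[ℂ] E) {τ : ℝ → ℝ} (hτ : Continuous τ)
    (hg : Continuous g) : Continuous fun s => exp ((τ s : ℂ) • A) (g s) :=
  ((continuous_exp_ofReal_smul A).comp hτ).clm_apply hg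

variable (A v g) in
noncomputable def duhamel (t : ℝ) : E :=
  exp ((t : ℂ) • A) v + ∫ s in (0 : ℝ)..t, exp (((t - s : ℝ) : ℂ) • A) (g s)

omit [CompleteSpace E] in
lemma duhamel_zero : duhamel A v g 0 = v := by
  simp [duhamel]

lemma duhamel_eq_exp_apply (hg : Continuous g) (t : ℝ) :
    duhamel A v g t =
      exp ((t : ℂ) • A) (v + ∫ s in (0 : ℝ)..t, exp (((-s : ℝ) : ℂ) • A) (g s)) := by
  rw [duhamel, map_add, ← ContinuousLinearMap.intervalIntegral_comp_comm _
    ((continuous_neg.exp_ofReal_smul_apply A hg).intervalIntegrable 0 t)]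
  simp only [exp_ofReal_sub_smul (𝔸 := E →L[ℂ] E), mul_apply_eq_comp]

theorem hasDerivAt_duhamel (hg : Continuous g) (t : ℝ) :
    HasDerivAt (duhamel A v g) (A (duhamel A v g t) + g t) t := by
  have hw := ((continuous_neg.exp_ofReal_smul_apply A hg).integral_hasStrictDerivAt 0 t).hasDerivAt
  rw [show duhamel A v g = _ from funext (duhamel_eq_exp_apply hg)]
  convert (hasDerivAt_exp_ofReal_smul A t).complexCLM_apply (hw.const_add v) using 1
  rw [mul_apply_eq_comp, ← mul_apply_eq_comp (exp _), exp_ofReal_smul_mul_exp_neg,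
    one_apply_eq_self]

lemma duhamel_sub_duhamel (A' : E →L[ℂ] E) (v' : E) (hg : Continuous g) (t : ℝ) :
    duhamel A v g t - duhamel A' v' g t = exp ((t : ℂ) • A) v - exp ((t : ℂ) • A') v' +
      ∫ s in (0 : ℝ)..t, (exp (((t - s : ℝ) : ℂ) • A) - exp (((t - s : ℝ) : ℂ) • A')) (g s) := by
  have hint (A : E →L[ℂ] E) : IntervalIntegrable
      (fun s : ℝ => exp (((t - s : ℝ) : ℂ) • A) (g s)) MeasureTheory.volume 0 t :=
    ((continuous_const.sub continuous_id).exp_ofReal_smul_apply A hg).intervalIntegrable 0 t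
  simp only [duhamel, sub_apply, intervalIntegral.integral_sub (hint A) (hint A')]
  abel

end Duhamel

lemma sq_sub_sq_mul_eq_neg_of_solvents {R : Type*} [Ring R] {A A' B C P : R}
    (hA : A ^ 2 + B * A + C = 0) (hA' : A' ^ 2 + B * A' + C = 0) (hP : (A - A') * P = 1) :
    (A ^ 2 - A' ^ 2) * P = -B := by
  have h : A ^ 2 - A' ^ 2 = (A ^ 2 + B * A + C) - (A' ^ 2 + B * A' + C) - B * (A - A') := by
    noncomm_ring
  rw [h, hA, hA', sub_self, zero_sub, neg_mul, mul_assoc, hP, mul_one]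

lemma solvents_apply_sub_apply_eq {E : Type*} [NormedAddCommGroup E] [NormedSpace ℂ E]
    {A A' B C : E →L[ℂ] E} (hA : A ^ 2 + B * A + C = 0)
    (hA' : A' ^ 2 + B * A' + C = 0) (v v' w : E) :
    ((A ^ 2) v - (A' ^ 2) v' + w) + B (A v - A' v') + C (v - v') = w := by
  have hv := congrArg (· v) hA
  have hv' := congrArg (· v') hA'
  simp only [add_apply, mul_apply_eq_comp, zero_apply] at hv hv'
  rw [map_sub, map_sub]
  linear_combination (norm := module) hv - hv'

section SecondOrder

variable {E : Type*} [NormedAddCommGroup E] [NormedSpace ℂ E] {A A' : E →L[ℂ] E}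
  {y y' : ℝ → E} {w : E} {t : ℝ}

lemma HasDerivAt.sub_of_common_forcing (hy : HasDerivAt y (A (y t) + w) t)
    (hy' : HasDerivAt y' (A' (y' t) + w) t) :
    HasDerivAt (fun s => y s - y' s) (A (y t) - A' (y' t)) t :=
  (hy.sub hy').congr_deriv (add_sub_add_right_eq_sub _ _ _)

lemma HasDerivAt.apply_sub_apply_of_common_forcing (hy : HasDerivAt y (A (y t) + w) t)
    (hy' : HasDerivAt y' (A' (y' t) + w) t) :
    HasDerivAt (fun s => A (y s) - A' (y' s))
      ((A ^ 2) (y t) - (A' ^ 2) (y' t) + (A - A') w) t := by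
  have hAy : HasDerivAt (fun s => A (y s)) (A (A (y t) + w)) t :=
    (A.restrictScalars ℝ).hasFDerivAt.comp_hasDerivAt t hy
  have hAy' : HasDerivAt (fun s => A' (y' s)) (A' (A' (y' t) + w)) t :=
    (A'.restrictScalars ℝ).hasFDerivAt.comp_hasDerivAt t hy'
  refine (hAy.sub hAy').congr_deriv ?_
  simp only [map_add, sq, mul_apply_eq_comp, sub_apply]
  abel

end SecondOrder

theorem exists_solution_of_solvents {E : Type*} [NormedAddCommGroup E] [NormedSpace ℂ E]
    [CompleteSpace E] {A A' B C P : E →L[ℂ] E} (hA : A ^ 2 + B * A + C = 0)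
    (hA' : A' ^ 2 + B * A' + C = 0) (hP : (A - A') * P = 1) {f : ℝ → E} (hf : Continuous f)
    (u₀ u₁ : E) {x : ℝ → E}
    (hx : ∀ t : ℝ, x t = ((A * exp ((t : ℂ) • A) - A' * exp ((t : ℂ) • A')) * P) u₀ +
      ((exp ((t : ℂ) • A) - exp ((t : ℂ) • A')) * P) (u₁ + B u₀) +
      ∫ s in (0 : ℝ)..t, ((exp (((t - s : ℝ) : ℂ) • A) - exp (((t - s : ℝ) : ℂ) • A')) * P) (f s)) :
    ∃ x' x'' : ℝ → E,
      (∀ t : ℝ, HasDerivAt x (x' t) t) ∧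
      (∀ t : ℝ, HasDerivAt x' (x'' t) t) ∧
      (∀ t : ℝ, x'' t + B (x' t) + C (x t) = f t) ∧
      x 0 = u₀ ∧ x' 0 = u₁ := by
  have hPf : Continuous fun s => P (f s) := P.continuous.comp hf
  have hPapply : ∀ v, A (P v) - A' (P v) = v := fun v => by
    rw [← sub_apply, ← mul_apply_eq_comp, hP, one_apply_eq_self]
  set c := u₁ + B u₀ with hc
  set y := duhamel A (A (P u₀) + P c) fun s => P (f s)
  set y' := duhamel A' (A' (P u₀) + P c) fun s => P (f s)
  have hy : ∀ t, HasDerivAt y (A (y t) + P (f t)) t := hasDerivAt_duhamel hPf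
  have hy' : ∀ t, HasDerivAt y' (A' (y' t) + P (f t)) t := hasDerivAt_duhamel hPf
  have hxy : x = fun t => y t - y' t := by
    ext1 t
    rw [hx, duhamel_sub_duhamel _ _ hPf]
    simp only [mul_apply_eq_comp, sub_apply, map_add, apply_exp_smul_apply_comm]
    abel
  refine ⟨fun t => A (y t) - A' (y' t), fun t => (A ^ 2) (y t) - (A' ^ 2) (y' t) + f t,
    fun t => ?_, fun t => ?_, fun t => ?_, ?_, ?_⟩
  · rw [hxy]
    exact (hy t).sub_of_common_forcing (hy' t)
  · simpa only [sub_apply, hPapply] using (hy t).apply_sub_apply_of_common_forcing (hy' t)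
  · rw [hxy]
    exact solvents_apply_sub_apply_eq hA hA' _ _ _
  · simp only [hxy, y, y', duhamel_zero, add_sub_add_right_eq_sub, hPapply]
  · simp only [y, y', duhamel_zero, map_add]
    have hB : (A ^ 2 - A' ^ 2) * P = -B := sq_sub_sq_mul_eq_neg_of_solvents hA hA' hP
    calc A (A (P u₀)) + A (P c) - (A' (A' (P u₀)) + A' (P c))
        = ((A ^ 2 - A' ^ 2) * P) u₀ + (A (P c) - A' (P c)) := by
          simp only [mul_apply_eq_comp, sub_apply, sq]; abel
      _ = u₁ := by rw [hB, hPapply, neg_apply, hc]; abel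

/-- variation-of-constants formula via a complete pair of right solvents:
`x(t) = U'(t)u₀ + U(t)(u₁ + Bu₀) + ∫₀ᵗ U(t−s)f(s) ds` is twice differentiable and solves
`x'' + Bx' + Cx = f` with `x(0) = u₀`, `x'(0) = u₁`. -/
theorem solution_of_initial_value_problem (n : ℕ) (B C X Z : Matrix (Fin n) (Fin n) ℂ)
    (hX : X ^ 2 + B * X + C = 0) (hZ : Z ^ 2 + B * Z + C = 0) (hXZ : IsUnit (X - Z))
    (f : ℝ → (Fin n → ℂ)) (hf : Continuous f)
    (U V : ℝ → Matrix (Fin n) (Fin n) ℂ)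
    (hU : ∀ t : ℝ, U t =
      (NormedSpace.exp ((t : ℂ) • X) - NormedSpace.exp ((t : ℂ) • Z)) * (X - Z)⁻¹)
    (hV : ∀ t : ℝ, V t =
      (X * NormedSpace.exp ((t : ℂ) • X) - Z * NormedSpace.exp ((t : ℂ) • Z)) * (X - Z)⁻¹)
    (u₀ u₁ : Fin n → ℂ) (x : ℝ → (Fin n → ℂ))
    (hx : ∀ t : ℝ, x t = (V t).mulVec u₀ + (U t).mulVec (u₁ + B.mulVec u₀) +
      ∫ s in (0:ℝ)..t, (U (t - s)).mulVec (f s)) :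
    ∃ x' x'' : ℝ → (Fin n → ℂ),
      (∀ t : ℝ, HasDerivAt x (x' t) t) ∧
      (∀ t : ℝ, HasDerivAt x' (x'' t) t) ∧
      (∀ t : ℝ, x'' t + B.mulVec (x' t) + C.mulVec (x t) = f t) ∧
      x 0 = u₀ ∧ x' 0 = u₁ := by
  have hP : (Matrix.toCLM' (Fin n) ℂ X - Matrix.toCLM' (Fin n) ℂ Z) *
      Matrix.toCLM' (Fin n) ℂ (X - Z)⁻¹ = 1 := by
    rw [← map_sub, ← map_mul, Matrix.mul_nonsing_inv _ ((Matrix.isUnit_iff_isUnit_det _).mp hXZ),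
      map_one]
  have hsol : ∀ {W}, W ^ 2 + B * W + C = 0 → Matrix.toCLM' (Fin n) ℂ W ^ 2 +
      Matrix.toCLM' (Fin n) ℂ B * Matrix.toCLM' (Fin n) ℂ W + Matrix.toCLM' (Fin n) ℂ C = 0 :=
    fun h => by simpa using congrArg (Matrix.toCLM' (Fin n) ℂ) h
  simpa only [Matrix.toCLM'_apply] using exists_solution_of_solvents (hsol hX) (hsol hZ) hP hf u₀ u₁
    (x := x) fun t => by
      simp only [← Matrix.toCLM'_apply, hx, hU, hV, map_mul, map_sub, Matrix.toCLM'_exp, map_smul]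
end

section
/- Let n ∈ ℕ, let B, C be n×n complex matrices with companion matrix 𝒞₁ = fromBlocks 0 1 (−C) (−B), let λ₀ ∈ ℂ, and let x₀, x₁, …, x_k ∈ ℂⁿ with x₀ ≠ 0. Set x₋₁ = x₋₂ = 0. Then the vectors x₀, …, x_k satisfy L(λ₀)·xᵢ + (2λ₀·1 + B)·x_{i−1} + x_{i−2} = 0 for all i = 0, 1, …, k (i.e. they form a Jordan chain for the pencil L(λ) = λ²·1 + λ·B + C corresponding to λ₀) if and only if the vectors hᵢ = (xᵢ, λ₀·xᵢ + x_{i−1}) ∈ ℂ^{2n}, i = 0, 1, …, k, form a Jordan chain for the matrix 𝒞₁ corresponding to λ₀, i.e. h₀ ≠ 0, 𝒞₁·h₀ = λ₀·h₀, and 𝒞₁·hᵢ = λ₀·hᵢ + h_{i−1} for i = 1, …, k. -/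
/-!
Write `hᵢ = (xᵢ, λ₀xᵢ + x_{i−1})`. The first block row of `𝒞₁hᵢ = λ₀hᵢ + h_{i−1}` reads
`λ₀xᵢ + x_{i−1} = λ₀xᵢ + x_{i−1}` and holds automatically; the second block row is exactly the
pencil relation `L(λ₀)xᵢ + (2λ₀ + B)x_{i−1} + x_{i−2} = 0`. Since `h₋₁ = 0`, the case `i = 0` is
the eigenvector equation, and `h₀ ≠ 0` because its first block is `x₀`.
-/

open Matrix

theorem Sum.smul_elim {S M α β : Type*} [SMul S M] (c : S) (f : α → M) (g : β → M) :
    c • Sum.elim f g = Sum.elim (c • f) (c • g) := by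
  ext (i | i) <;> rfl

section Companion

variable {R m : Type*} [CommRing R] [Fintype m] [DecidableEq m]

theorem companion_mulVec_sumElim (B C : Matrix m m R) (u y : m → R) :
    fromBlocks 0 1 (-C) (-B) *ᵥ Sum.elim u y = Sum.elim y (-(C *ᵥ u) - B *ᵥ y) := by
  rw [fromBlocks_mulVec]
  simp [neg_mulVec, sub_eq_add_neg]

theorem companion_mulVec_eq_smul_add_iff (B C : Matrix m m R) (lam : R) (u v w : m → R) :
    fromBlocks 0 1 (-C) (-B) *ᵥ Sum.elim u (lam • u + v) =
        lam • Sum.elim u (lam • u + v) + Sum.elim v (lam • v + w) ↔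
      (lam ^ 2 • (1 : Matrix m m R) + lam • B + C) *ᵥ u + ((2 * lam) • (1 : Matrix m m R) + B) *ᵥ v
        + w = 0 := by
  rw [companion_mulVec_sumElim, Sum.smul_elim, ← Sum.elim_add_add, Sum.elim_eq_iff]
  simp only [add_mulVec, smul_mulVec, one_mulVec, mulVec_add, mulVec_smul, true_and]
  constructor <;> intro H <;> linear_combination (norm := module) -H

end Companion

/-- `x₀, …, x_k` (with the conventions `x₋₁ = x₋₂ = 0`) is a Jordan chain for
the pencil `L(λ) = λ²·1 + λ·B + C` at `λ₀` iff the vectors `hᵢ = (xᵢ, λ₀xᵢ + x_{i−1})` form a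
Jordan chain for the companion matrix `𝒞₁ = fromBlocks 0 1 (−C) (−B)` at `λ₀`. -/
theorem jordan_chain_pencil_iff_companion (n k : ℕ) (B C : Matrix (Fin n) (Fin n) ℂ)
    (lam : ℂ) (x : ℕ → (Fin n → ℂ)) (hx0 : x 0 ≠ 0)
    (xx : ℤ → (Fin n → ℂ))
    (hxx : ∀ i : ℤ, xx i = if 0 ≤ i ∧ i ≤ (k : ℤ) then x i.toNat else 0)
    (h : ℤ → (Fin n ⊕ Fin n → ℂ))
    (hh : ∀ i : ℤ, h i = Sum.elim (xx i) (lam • xx i + xx (i - 1))) :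
    (∀ i : ℤ, 0 ≤ i → i ≤ (k : ℤ) →
        ((lam ^ 2) • (1 : Matrix (Fin n) (Fin n) ℂ) + lam • B + C).mulVec (xx i) +
          ((2 * lam) • (1 : Matrix (Fin n) (Fin n) ℂ) + B).mulVec (xx (i - 1)) +
          xx (i - 2) = 0) ↔
      (h 0 ≠ 0 ∧
        (Matrix.fromBlocks 0 1 (-C) (-B)).mulVec (h 0) = lam • h 0 ∧
        ∀ i : ℤ, 1 ≤ i → i ≤ (k : ℤ) →
          (Matrix.fromBlocks 0 1 (-C) (-B)).mulVec (h i) = lam • h i + h (i - 1)) := by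
  have xx_neg : ∀ i : ℤ, i < 0 → xx i = 0 := fun i hi => by
    rw [hxx, if_neg (by omega)]
  have h_neg_one : h (-1) = 0 := by
    rw [hh, xx_neg _ (by norm_num), xx_neg _ (by norm_num)]
    simp
  have h_zero_ne : h 0 ≠ 0 := fun h0 => hx0 <| by
    simpa [hxx, hh] using congrArg (· ∘ Sum.inl) h0
  have pencil_iff_companion (i : ℤ) :
      ((lam ^ 2) • (1 : Matrix (Fin n) (Fin n) ℂ) + lam • B + C) *ᵥ xx i +
          ((2 * lam) • (1 : Matrix (Fin n) (Fin n) ℂ) + B) *ᵥ xx (i - 1) + xx (i - 2) = 0 ↔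
        fromBlocks 0 1 (-C) (-B) *ᵥ h i = lam • h i + h (i - 1) := by
    rw [hh i, hh (i - 1), show i - 1 - 1 = i - 2 by ring]
    exact (companion_mulVec_eq_smul_add_iff B C lam _ _ _).symm
  simp only [pencil_iff_companion]
  constructor
  · intro H
    exact ⟨h_zero_ne, by simpa [h_neg_one] using H 0 le_rfl (by positivity),
      fun i hi hik => H i (by omega) hik⟩
  · rintro ⟨-, H0, H⟩ i hi hik
    obtain rfl | hi := hi.eq_or_lt
    · simpa [h_neg_one] using H0
    · exact H i (by omega) hik
end

section
/- Let n ∈ ℕ, let B, C, X be n×n complex matrices with X² + B·X + C = 0, let λ₀ ∈ ℂ, and let x₀, x₁, …, x_k ∈ ℂⁿ with x₀ ≠ 0 be a Jordan chain for the matrix X corresponding to λ₀, i.e. X·x₀ = λ₀·x₀ and X·xᵢ = λ₀·xᵢ + x_{i−1} for i = 1, …, k. Then, setting x₋₁ = x₋₂ = 0, the vectors x₀, …, x_k satisfy L(λ₀)·xᵢ + (2λ₀·1 + B)·x_{i−1} + x_{i−2} = 0 for all i = 0, 1, …, k, i.e. they form a Jordan chain for the pencil L(λ) = λ²·1 + λ·B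 + C corresponding to the same λ₀. -/
open Matrix

def zeroExtend {V : Type*} [Zero V] (x : ℕ → V) (k : ℕ) (i : ℤ) : V :=
  if 0 ≤ i ∧ i ≤ (k : ℤ) then x i.toNat else 0

section

variable {ι R : Type*} [Fintype ι]

theorem mulVec_zeroExtend_of_jordanChain [Semiring R] {X : Matrix ι ι R} {lam : R}
    {x : ℕ → ι → R} {k : ℕ} (h0 : X *ᵥ x 0 = lam • x 0)
    (hchain : ∀ i : ℕ, 1 ≤ i → i ≤ k → X *ᵥ x i = lam • x i + x (i - 1))
    {i : ℤ} (hi : i ≤ k) :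
    X *ᵥ zeroExtend x k i = lam • zeroExtend x k i + zeroExtend x k (i - 1) := by
  unfold zeroExtend
  rcases lt_trichotomy i 0 with hneg | rfl | hpos
  · rw [if_neg (by omega), if_neg (by omega)]
    simp
  · rw [if_pos (by omega), if_neg (by omega), add_zero]
    exact h0
  · rw [if_pos (by omega), if_pos (by omega), show (i - 1).toNat = i.toNat - 1 by omega]
    exact hchain i.toNat (by omega) (by omega)

/-- Expand `(X² + B X + C) y = 0` using `X y = λ y + y'` and `X² y = λ² y + 2 λ y' + y''`. -/
theorem pencil_mulVec_add_eq_zero_of_solvent [CommRing R] [DecidableEq ι]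
    {B C X : Matrix ι ι R} (hX : X ^ 2 + B * X + C = 0) {lam : R} {y y' y'' : ι → R}
    (h : X *ᵥ y = lam • y + y') (h' : X *ᵥ y' = lam • y' + y'') :
    (lam ^ 2 • (1 : Matrix ι ι R) + lam • B + C) *ᵥ y + ((2 * lam) • (1 : Matrix ι ι R) + B) *ᵥ y'
      + y'' = 0 := by
  have hy := congrArg (· *ᵥ y) hX
  simp only [pow_two, ← mulVec_mulVec, add_mulVec, zero_mulVec, h, mulVec_add, mulVec_smul, h',
    smul_mulVec, one_mulVec] at hy ⊢
  linear_combination (norm := module) hy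

end

theorem jordan_chain_of_solvent_is_jordan_chain_of_pencil_general (n k : ℕ)
    (B C X : Matrix (Fin n) (Fin n) ℂ) (hX : X ^ 2 + B * X + C = 0)
    (lam : ℂ) (x : ℕ → (Fin n → ℂ))
    (xx : ℤ → (Fin n → ℂ))
    (hxx : ∀ i : ℤ, xx i = if 0 ≤ i ∧ i ≤ (k : ℤ) then x i.toNat else 0)
    (hchain0 : X.mulVec (x 0) = lam • x 0)
    (hchain : ∀ i : ℕ, 1 ≤ i → i ≤ k → X.mulVec (x i) = lam • x i + x (i - 1)) :
    ∀ i : ℤ, 0 ≤ i → i ≤ (k : ℤ) →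
      ((lam ^ 2) • (1 : Matrix (Fin n) (Fin n) ℂ) + lam • B + C).mulVec (xx i) +
        ((2 * lam) • (1 : Matrix (Fin n) (Fin n) ℂ) + B).mulVec (xx (i - 1)) +
        xx (i - 2) = 0 := by
  intro i _ hi
  obtain rfl : xx = zeroExtend x k := funext hxx
  rw [show i - 2 = i - 1 - 1 by ring]
  exact pencil_mulVec_add_eq_zero_of_solvent hX
    (mulVec_zeroExtend_of_jordanChain hchain0 hchain hi)
    (mulVec_zeroExtend_of_jordanChain hchain0 hchain (by omega))

/-- a Jordan chain `x₀, …, x_k` of a right solvent `X` at `λ₀` is a Jordan chain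
of the pencil `L(λ) = λ²·1 + λ·B + C` at the same `λ₀` (with the conventions
`x₋₁ = x₋₂ = 0`). -/
theorem jordan_chain_of_solvent_is_jordan_chain_of_pencil (n k : ℕ)
    (B C X : Matrix (Fin n) (Fin n) ℂ) (hX : X ^ 2 + B * X + C = 0)
    (lam : ℂ) (x : ℕ → (Fin n → ℂ)) (hx0 : x 0 ≠ 0)
    (xx : ℤ → (Fin n → ℂ))
    (hxx : ∀ i : ℤ, xx i = if 0 ≤ i ∧ i ≤ (k : ℤ) then x i.toNat else 0)
    (hchain0 : X.mulVec (x 0) = lam • x 0)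
    (hchain : ∀ i : ℕ, 1 ≤ i → i ≤ k → X.mulVec (x i) = lam • x i + x (i - 1)) :
    ∀ i : ℤ, 0 ≤ i → i ≤ (k : ℤ) →
      ((lam ^ 2) • (1 : Matrix (Fin n) (Fin n) ℂ) + lam • B + C).mulVec (xx i) +
        ((2 * lam) • (1 : Matrix (Fin n) (Fin n) ℂ) + B).mulVec (xx (i - 1)) +
        xx (i - 2) = 0 :=
  jordan_chain_of_solvent_is_jordan_chain_of_pencil_general n k B C X hX lam x xx hxx hchain0 hchain
end

section
/- Let n ∈ ℕ, let B, C be n×n complex matrices, let λ₀ ∈ ℂ, and let x₀, x₁, …, x_k ∈ ℂⁿ with x₀ ≠ 0. Set x₋₁ = x₋₂ = 0. Then the vectors x₀, …, x_k form a Jordan chain for the pencil L(λ) = λ²·1 + λ·B + C corresponding to λ₀ (i.e. L(λ₀)·xᵢ + (2λ₀·1 + B)·x_{i−1} + x_{i−2} = 0 for i = 0, …, k) if and only if, for each i = 0, 1, …, k, the function t ↦ (∑_{j=0}^{i} (t^{i−j}/(i−j)!)·x_j) · e^{λ₀ t} from ℝ to ℂⁿ satisfies the homogeneous differential equation x''(t)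 + B·x'(t) + C·x(t) = 0 for all t ∈ ℝ. -/
/-!
Write `p_i(t) = ∑_{j ≤ i} t^{i-j}/(i-j)! • x_j`. Then `p_i'` is the same sum taken over the
coefficient sequence shifted by one place (`x_{-1} = 0`), so differentiating `e^{λt} p_i(t)`
replaces the coefficients `y` by `λ y + S y`, `S` the shift. Two differentiations turn
`g_i'' + B g_i' + C g_i` into `e^{λt} ∑_{j ≤ i} t^{i-j}/(i-j)! • r_j`, where
`r_j = L(λ) x_j + (2λ + B) x_{j-1} + x_{j-2}` is the defect of the Jordan chain condition.
This vanishes when `r_0 = ⋯ = r_i = 0`, and at `t = 0` it equals `r_i`.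
-/

open Finset Matrix

def seqShift {E : Type*} [Zero E] (y : ℕ → E) : ℕ → E
  | 0 => 0
  | m + 1 => y m

@[simp] lemma seqShift_zero {E : Type*} [Zero E] (y : ℕ → E) : seqShift y 0 = 0 := rfl

@[simp] lemma seqShift_succ {E : Type*} [Zero E] (y : ℕ → E) (m : ℕ) :
    seqShift y (m + 1) = y m := rfl

lemma eq_seqShift_iterate_of_extend {E : Type*} [Zero E] {x : ℕ → E} {xx : ℤ → E} {k : ℕ}
    (hxx : ∀ i : ℤ, xx i = if 0 ≤ i ∧ i ≤ (k : ℤ) then x i.toNat else 0) (d : ℕ) {m : ℕ}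
    (hm : m ≤ k) : xx (m - d) = seqShift^[d] x m := by
  induction d generalizing m with
  | zero => simp [hxx, hm]
  | succ d ih =>
    rw [Function.iterate_succ_apply']
    cases m with
    | zero => rw [hxx, if_neg (by omega), seqShift_zero]
    | succ m =>
      rw [seqShift_succ, ← ih (by omega)]
      congr 1
      push_cast; ring

section ChainPolynomial

variable {E : Type*} [NormedAddCommGroup E] [NormedSpace ℂ E]

noncomputable def chainPoly (y : ℕ → E) (i : ℕ) (t : ℝ) : E :=
  ∑ j ∈ Finset.range (i + 1), (((t : ℂ) ^ (i - j)) / (Nat.factorial (i - j) : ℂ)) • y j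

lemma hasDerivAt_pow_div_factorial (m : ℕ) (t : ℝ) :
    HasDerivAt (fun s : ℝ => (s : ℂ) ^ (m + 1) / ((m + 1).factorial : ℂ))
      ((t : ℂ) ^ m / (m.factorial : ℂ)) t := by
  refine (((hasDerivAt_pow (m + 1) (t : ℂ)).comp_ofReal).div_const _).congr_deriv ?_
  rw [Nat.factorial_succ, Nat.cast_mul, Nat.add_sub_cancel, mul_div_mul_left]
  exact_mod_cast m.succ_ne_zero

lemma chainPoly_eq_sum_add (y : ℕ → E) (i : ℕ) (t : ℝ) :
    chainPoly y i t = ∑ j ∈ Finset.range i,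
      (((t : ℂ) ^ (i - (j + 1) + 1)) / (Nat.factorial (i - (j + 1) + 1) : ℂ)) • y j + y i := by
  rw [chainPoly, sum_range_succ, Nat.sub_self, pow_zero, Nat.factorial_zero, Nat.cast_one,
    div_one, one_smul]
  refine congrArg (· + y i) (sum_congr rfl fun j hj => ?_)
  rw [show i - j = i - (j + 1) + 1 by have := mem_range.1 hj; omega]

lemma chainPoly_seqShift (y : ℕ → E) (i : ℕ) (t : ℝ) :
    chainPoly (seqShift y) i t = ∑ j ∈ Finset.range i,
      (((t : ℂ) ^ (i - (j + 1))) / (Nat.factorial (i - (j + 1)) : ℂ)) • y j := by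
  simp [chainPoly, sum_range_succ']

theorem hasDerivAt_chainPoly (y : ℕ → E) (i : ℕ) (t : ℝ) :
    HasDerivAt (chainPoly y i) (chainPoly (seqShift y) i t) t := by
  rw [funext (chainPoly_eq_sum_add y i), chainPoly_seqShift]
  exact (HasDerivAt.fun_sum fun j _ =>
    (hasDerivAt_pow_div_factorial _ t).smul_const (y j)).add_const (y i)

lemma chainPoly_add (y z : ℕ → E) (i : ℕ) (t : ℝ) :
    chainPoly (y + z) i t = chainPoly y i t + chainPoly z i t := by
  simp only [chainPoly, Pi.add_apply, smul_add, sum_add_distrib]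

lemma chainPoly_smul (a : ℂ) (y : ℕ → E) (i : ℕ) (t : ℝ) :
    chainPoly (a • y) i t = a • chainPoly y i t := by
  simp only [chainPoly, Pi.smul_apply, smul_sum, smul_comm a]

lemma map_chainPoly {F : Type*} [NormedAddCommGroup F] [NormedSpace ℂ F] (f : E →ₗ[ℂ] F)
    (y : ℕ → E) (i : ℕ) (t : ℝ) : f (chainPoly y i t) = chainPoly (f ∘ y) i t := by
  simp only [chainPoly, map_sum, map_smul, Function.comp_apply]

lemma chainPoly_congr {y z : ℕ → E} {i : ℕ} (h : ∀ j ≤ i, y j = z j) (t : ℝ) :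
    chainPoly y i t = chainPoly z i t :=
  sum_congr rfl fun j hj => by rw [h j (Nat.lt_succ_iff.1 (mem_range.1 hj))]

@[simp] lemma chainPoly_zero (i : ℕ) (t : ℝ) : chainPoly (0 : ℕ → E) i t = 0 := by
  simp [chainPoly]

@[simp] lemma chainPoly_at_zero (y : ℕ → E) (i : ℕ) : chainPoly y i 0 = y i := by
  rw [chainPoly, sum_eq_single_of_mem i (self_mem_range_succ i)]
  · simp
  · intro j hj hji
    rw [Complex.ofReal_zero, zero_pow (by have := mem_range.1 hj; omega), zero_div, zero_smul]

def derivCoeffs (lam : ℂ) (y : ℕ → E) : ℕ → E := lam • y + seqShift y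

noncomputable def chainSol (lam : ℂ) (y : ℕ → E) (i : ℕ) (t : ℝ) : E :=
  Complex.exp (lam * t) • chainPoly y i t

lemma hasDerivAt_cexp_mul_ofReal (lam : ℂ) (t : ℝ) :
    HasDerivAt (fun s : ℝ => Complex.exp (lam * s)) (lam * Complex.exp (lam * t)) t := by
  simpa [mul_comm] using (((hasDerivAt_id (t : ℂ)).const_mul lam).cexp).comp_ofReal

theorem hasDerivAt_chainSol (lam : ℂ) (y : ℕ → E) (i : ℕ) (t : ℝ) :
    HasDerivAt (chainSol lam y i) (chainSol lam (derivCoeffs lam y) i t) t := by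
  refine ((hasDerivAt_cexp_mul_ofReal lam t).smul (hasDerivAt_chainPoly y i t)).congr_deriv ?_
  rw [chainSol, derivCoeffs, chainPoly_add, chainPoly_smul]
  module

end ChainPolynomial

section Pencil

variable {ι : Type*} [Fintype ι] [DecidableEq ι]

def jordanResidual (B C : Matrix ι ι ℂ) (lam : ℂ) (y : ℕ → ι → ℂ) (m : ℕ) : ι → ℂ :=
  (lam ^ 2 • (1 : Matrix ι ι ℂ) + lam • B + C) *ᵥ y m + ((2 * lam) • (1 : Matrix ι ι ℂ) + B) *ᵥ
    seqShift y m + seqShift (seqShift y) m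

theorem chainSol_ode_eq_chainSol_jordanResidual (B C : Matrix ι ι ℂ) (lam : ℂ) (y : ℕ → ι → ℂ)
    (i : ℕ) (t : ℝ) :
    chainSol lam (derivCoeffs lam (derivCoeffs lam y)) i t +
        B *ᵥ chainSol lam (derivCoeffs lam y) i t + C *ᵥ chainSol lam y i t =
      chainSol lam (jordanResidual B C lam y) i t := by
  have hres : derivCoeffs lam (derivCoeffs lam y) + (B *ᵥ ·) ∘ derivCoeffs lam y +
      (C *ᵥ ·) ∘ y = jordanResidual B C lam y := by
    funext m
    cases m <;>
      simp only [derivCoeffs, jordanResidual, Pi.add_apply, Pi.smul_apply, Function.comp_apply,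
        seqShift_zero, seqShift_succ, mulVec_zero, add_mulVec, smul_mulVec, one_mulVec,
        mulVec_add, mulVec_smul] <;> module
  simp only [chainSol, mulVec_smul, ← smul_add, ← hres, chainPoly_add]
  rw [← mulVecLin_apply, map_chainPoly, ← mulVecLin_apply, map_chainPoly]
  rfl

theorem exists_hasDerivAt_ode_chainSol_iff (B C : Matrix ι ι ℂ) (lam : ℂ) (y : ℕ → ι → ℂ)
    (i : ℕ) :
    (∃ g' g'' : ℝ → ι → ℂ, (∀ t, HasDerivAt (chainSol lam y i) (g' t) t) ∧
      (∀ t, HasDerivAt g' (g'' t) t) ∧ ∀ t, g'' t + B *ᵥ g' t + C *ᵥ chainSol lam y i t = 0) ↔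
    ∀ t, chainSol lam (jordanResidual B C lam y) i t = 0 := by
  constructor
  · rintro ⟨g', g'', hg', hg'', hode⟩ t
    obtain rfl : g' = chainSol lam (derivCoeffs lam y) i :=
      funext fun t => (hg' t).unique (hasDerivAt_chainSol lam y i t)
    rw [← chainSol_ode_eq_chainSol_jordanResidual,
      ← (hg'' t).unique (hasDerivAt_chainSol lam _ i t), hode]
  · intro h
    exact ⟨_, _, hasDerivAt_chainSol lam y i, hasDerivAt_chainSol lam _ i,
      fun t => (chainSol_ode_eq_chainSol_jordanResidual B C lam y i t).trans (h t)⟩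

lemma jordanResidual_eq_of_extend {k : ℕ} {x : ℕ → ι → ℂ} {xx : ℤ → ι → ℂ}
    (hxx : ∀ i : ℤ, xx i = if 0 ≤ i ∧ i ≤ (k : ℤ) then x i.toNat else 0)
    (B C : Matrix ι ι ℂ) (lam : ℂ) {m : ℕ} (hm : m ≤ k) :
    jordanResidual B C lam x m =
      (lam ^ 2 • (1 : Matrix ι ι ℂ) + lam • B + C) *ᵥ xx m +
        ((2 * lam) • (1 : Matrix ι ι ℂ) + B) *ᵥ xx (m - 1) + xx (m - 2) := by
  have h0 := eq_seqShift_iterate_of_extend hxx 0 hm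
  have h1 := eq_seqShift_iterate_of_extend hxx 1 hm
  have h2 := eq_seqShift_iterate_of_extend hxx 2 hm
  simp only [Nat.cast_zero, sub_zero, Nat.cast_one, Nat.cast_ofNat, Function.iterate_zero_apply,
    Function.iterate_succ_apply] at h0 h1 h2
  rw [h0, h1, h2, jordanResidual]

end Pencil

theorem jordan_chain_iff_solutions_general (n k : ℕ) (B C : Matrix (Fin n) (Fin n) ℂ)
    (lam : ℂ) (x : ℕ → (Fin n → ℂ))
    (xx : ℤ → (Fin n → ℂ))
    (hxx : ∀ i : ℤ, xx i = if 0 ≤ i ∧ i ≤ (k : ℤ) then x i.toNat else 0)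
    (g : ℕ → ℝ → (Fin n → ℂ))
    (hg : ∀ (i : ℕ) (t : ℝ), g i t =
      Complex.exp (lam * t) •
        ∑ j ∈ Finset.range (i + 1),
          (((t : ℂ) ^ (i - j)) / (Nat.factorial (i - j) : ℂ)) • x j) :
    (∀ i : ℤ, 0 ≤ i → i ≤ (k : ℤ) →
        ((lam ^ 2) • (1 : Matrix (Fin n) (Fin n) ℂ) + lam • B + C).mulVec (xx i) +
          ((2 * lam) • (1 : Matrix (Fin n) (Fin n) ℂ) + B).mulVec (xx (i - 1)) +
          xx (i - 2) = 0) ↔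
      (∀ i : ℕ, i ≤ k →
        ∃ g' g'' : ℝ → (Fin n → ℂ),
          (∀ t : ℝ, HasDerivAt (g i) (g' t) t) ∧
          (∀ t : ℝ, HasDerivAt g' (g'' t) t) ∧
          (∀ t : ℝ, g'' t + B.mulVec (g' t) + C.mulVec (g i t) = 0)) := by
  have hg_eq (i : ℕ) : g i = chainSol lam x i := funext (hg i)
  simp only [hg_eq, exists_hasDerivAt_ode_chainSol_iff]
  constructor
  · intro h i hi t
    have hres : ∀ m ≤ i, jordanResidual B C lam x m = 0 := fun m hm =>
      (jordanResidual_eq_of_extend hxx B C lam (hm.trans hi)).trans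
        (h m m.cast_nonneg (by exact_mod_cast hm.trans hi))
    rw [chainSol, chainPoly_congr (z := 0) hres, chainPoly_zero, smul_zero]
  · intro h i h0 hik
    lift i to ℕ using h0
    have hik := Nat.cast_le.1 hik
    simpa [← jordanResidual_eq_of_extend hxx B C lam hik, chainSol] using h i hik 0

/-- `x₀, …, x_k` (with `x₋₁ = x₋₂ = 0`) is a Jordan chain of the pencil
`L(λ) = λ²·1 + λ·B + C` at `λ₀` iff for each `i ≤ k` the function
`t ↦ (∑_{j=0}^{i} t^{i−j}/(i−j)! · x_j) e^{λ₀ t}` solves the homogeneous equation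
`x'' + Bx' + Cx = 0`. -/
theorem jordan_chain_iff_solutions (n k : ℕ) (B C : Matrix (Fin n) (Fin n) ℂ)
    (lam : ℂ) (x : ℕ → (Fin n → ℂ)) (hx0 : x 0 ≠ 0)
    (xx : ℤ → (Fin n → ℂ))
    (hxx : ∀ i : ℤ, xx i = if 0 ≤ i ∧ i ≤ (k : ℤ) then x i.toNat else 0)
    (g : ℕ → ℝ → (Fin n → ℂ))
    (hg : ∀ (i : ℕ) (t : ℝ), g i t =
      Complex.exp (lam * t) •
        ∑ j ∈ Finset.range (i + 1),
          (((t : ℂ) ^ (i - j)) / (Nat.factorial (i - j) : ℂ)) • x j) :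
    (∀ i : ℤ, 0 ≤ i → i ≤ (k : ℤ) →
        ((lam ^ 2) • (1 : Matrix (Fin n) (Fin n) ℂ) + lam • B + C).mulVec (xx i) +
          ((2 * lam) • (1 : Matrix (Fin n) (Fin n) ℂ) + B).mulVec (xx (i - 1)) +
          xx (i - 2) = 0) ↔
      (∀ i : ℕ, i ≤ k →
        ∃ g' g'' : ℝ → (Fin n → ℂ),
          (∀ t : ℝ, HasDerivAt (g i) (g' t) t) ∧
          (∀ t : ℝ, HasDerivAt g' (g'' t) t) ∧
          (∀ t : ℝ, g'' t + B.mulVec (g' t) + C.mulVec (g i t) = 0)) :=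
  jordan_chain_iff_solutions_general n k B C lam x xx hxx g hg
end

section
/- Let n ∈ ℕ, let B, C, X be n×n complex matrices, and let 𝒞₁ = fromBlocks 0 1 (−C) (−B) be the companion matrix. Let ℳ ⊆ ℂ^{2n} be the column span of the 2n×n block matrix with top block the identity 1 and bottom block X (equivalently, ℳ = {(h, X·h) : h ∈ ℂⁿ}). Then X² + B·X + C = 0 if and only if ℳ is invariant under 𝒞₁ (i.e. 𝒞₁·v ∈ ℳ for every v ∈ ℳ). -/
/-- `X` is a right solvent of the pencil iff the subspace
`ℳ = {(h, X·h) : h ∈ ℂⁿ}` is invariant under the companion matrix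
`𝒞₁ = fromBlocks 0 1 (−C) (−B)`. -/
theorem solvent_iff_invariant_subspace (n : ℕ) (B C X : Matrix (Fin n) (Fin n) ℂ) :
    X ^ 2 + B * X + C = 0 ↔
      ∀ v ∈ {v : Fin n ⊕ Fin n → ℂ | ∃ h : Fin n → ℂ, v = Sum.elim h (X.mulVec h)},
        (Matrix.fromBlocks 0 1 (-C) (-B)).mulVec v ∈
          {v : Fin n ⊕ Fin n → ℂ | ∃ h : Fin n → ℂ, v = Sum.elim h (X.mulVec h)} := by
  constructor
  · rintro hsol v ⟨h, rfl⟩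
    refine ⟨X.mulVec h, ?_⟩
    rw [Matrix.fromBlocks_mulVec]
    have hXX : X * X = -C - B * X := by
      rw [pow_two] at hsol
      exact eq_sub_of_add_eq (eq_neg_of_add_eq_zero_left hsol)
    simp [Matrix.mulVec_mulVec, hXX, Matrix.sub_mulVec, Matrix.neg_mulVec, Matrix.add_mulVec,
      sub_eq_add_neg, add_comm]
  · intro hinv
    ext i j
    have key : ∀ h : Fin n → ℂ, (X ^ 2 + B * X + C).mulVec h = 0 := by
      intro h
      obtain ⟨h', heq⟩ := hinv (Sum.elim h (X.mulVec h)) ⟨h, rfl⟩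
      rw [Matrix.fromBlocks_mulVec] at heq
      have h1' : h' = X.mulVec h := by
        funext i
        have := congrFun heq (Sum.inl i)
        simpa using this.symm
      have h2 : ∀ i, ((-C).mulVec h + (-B).mulVec (X.mulVec h)) i = (X.mulVec h') i := by
        intro i; exact congrFun heq (Sum.inr i)
      funext i
      have := h2 i
      rw [h1'] at this
      simp only [Matrix.neg_mulVec, Pi.add_apply, Pi.neg_apply] at this
      simp only [Matrix.add_mulVec, pow_two, ← Matrix.mulVec_mulVec, Pi.add_apply, Pi.zero_apply]
      linear_combination -this
    have := congrFun (key (Pi.single j 1)) i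
    simpa [Matrix.mulVec_single] using this
end

section
/- Let n ∈ ℕ, let B, C, X, Z be n×n complex matrices, and let 𝒞₁ = fromBlocks 0 1 (−C) (−B) be the companion matrix. Let ℳ₁ = {(h, X·h) : h ∈ ℂⁿ} and ℳ₂ = {(h, Z·h) : h ∈ ℂⁿ} be the corresponding subspaces of ℂ^{2n}. Then X and Z form a complete pair of right solvents of the pencil (i.e. X² + B·X + C = 0, Z² + B·Z + C = 0, and X − Z is invertible) if and only if ℳ₁ and ℳ₂ are both invariant under 𝒞₁ and ℂ^{2n} is the (internal) direct sum ℳ₁ ⊕ ℳ₂, i.e. ℳ₁ ∩ ℳ₂ = {0} and ℳ₁ + ℳ₂ = ℂ^{2n}. -/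
/-!
Write `G X = {(h, X h)}`. The companion matrix sends `(h, X h)` to `(X h, -C h - B X h)`,
which lies in `G X` exactly when `(X² + B X + C) h = 0`; so `G X` is invariant iff `X` is a right
solvent. A vector of `G X ∩ G Z` is `(h, X h)` with `(X - Z) h = 0`, and `(a, b) = (h, X h) + (k, Z k)`
is solvable iff `b - Z a` lies in the range of `X - Z` (take `k = a - h`). Hence the two
subspaces meet trivially iff `X - Z` is injective and span iff it is surjective, and both hold
iff `X - Z` is invertible.
-/

open Matrix

variable {R n : Type*} [Fintype n]

def mulVecGraph [NonUnitalNonAssocSemiring R] (X : Matrix n n R) : Set (n ⊕ n → R) :=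
  {v | ∃ h, v = Sum.elim h (X *ᵥ h)}

section CommRing

variable [CommRing R]

theorem sum_elim_mem_mulVecGraph_iff {X : Matrix n n R} {a b : n → R} :
    Sum.elim a b ∈ mulVecGraph X ↔ b = X *ᵥ a := by
  constructor
  · rintro ⟨h, hv⟩
    obtain ⟨rfl, rfl⟩ := Sum.elim_eq_iff.1 hv
    rfl
  · rintro rfl
    exact ⟨a, rfl⟩

theorem fromBlocks_companion_mulVec_sum_elim [DecidableEq n] (B C : Matrix n n R) (a b : n → R) :
    fromBlocks 0 1 (-C) (-B) *ᵥ Sum.elim a b = Sum.elim b (-(C *ᵥ a) - B *ᵥ b) := by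
  simp [fromBlocks_mulVec, neg_mulVec, sub_eq_add_neg]

theorem companion_mapsTo_mulVecGraph_iff [DecidableEq n] (B C X : Matrix n n R) :
    (∀ v ∈ mulVecGraph X, fromBlocks 0 1 (-C) (-B) *ᵥ v ∈ mulVecGraph X) ↔
      X ^ 2 + B * X + C = 0 := by
  have image_mem_iff (h : n → R) :
      fromBlocks 0 1 (-C) (-B) *ᵥ Sum.elim h (X *ᵥ h) ∈ mulVecGraph X ↔
        (X ^ 2 + B * X + C) *ᵥ h = 0 := by
    rw [fromBlocks_companion_mulVec_sum_elim, sum_elim_mem_mulVecGraph_iff, add_mulVec,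
      add_mulVec, sq, ← mulVec_mulVec, ← mulVec_mulVec]
    constructor <;> intro e <;> linear_combination -e
  rw [ext_iff_mulVec]
  simp only [zero_mulVec, ← image_mem_iff]
  exact ⟨fun hinv h ↦ hinv _ ⟨h, rfl⟩, fun hinv _ ⟨h, hv⟩ ↦ hv ▸ hinv h⟩

theorem mulVecGraph_inter_trivial_iff (X Z : Matrix n n R) :
    (∀ v, v ∈ mulVecGraph X → v ∈ mulVecGraph Z → v = 0) ↔
      Function.Injective (X - Z).mulVec := by
  rw [show (X - Z).mulVec = ⇑(X - Z).mulVecLin from rfl, injective_iff_map_eq_zero]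
  constructor
  · intro htriv h hker
    have hXZ : X *ᵥ h = Z *ᵥ h := sub_eq_zero.1 (by simpa [sub_mulVec] using hker)
    have hv := htriv _ ⟨h, rfl⟩ (sum_elim_mem_mulVecGraph_iff.2 hXZ)
    exact funext fun i ↦ congrFun hv (Sum.inl i)
  · rintro hinj _ ⟨h, rfl⟩ hZ
    have hker : (X - Z) *ᵥ h = 0 := by
      rw [sub_mulVec, ← sum_elim_mem_mulVecGraph_iff.1 hZ, sub_self]
    rw [hinj h hker, mulVec_zero, Sum.elim_zero_zero]

theorem mulVecGraph_add_eq_univ_iff (X Z : Matrix n n R) :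
    (∀ v : n ⊕ n → R, ∃ v₁ ∈ mulVecGraph X, ∃ v₂ ∈ mulVecGraph Z, v = v₁ + v₂) ↔
      Function.Surjective (X - Z).mulVec := by
  constructor
  · intro hspan w
    obtain ⟨_, ⟨h, rfl⟩, _, ⟨k, rfl⟩, hv⟩ := hspan (Sum.elim 0 w)
    rw [← Sum.elim_add_add, Sum.elim_eq_iff] at hv
    obtain ⟨hk, hw⟩ := hv
    rw [eq_neg_of_add_eq_zero_right hk.symm, mulVec_neg] at hw
    exact ⟨h, by rw [sub_mulVec, hw, sub_eq_add_neg]⟩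
  · intro hsurj v
    obtain ⟨a, b, rfl⟩ : ∃ a b, v = Sum.elim a b := ⟨_, _, (Sum.elim_comp_inl_inr v).symm⟩
    obtain ⟨h, hh⟩ := hsurj (b - Z *ᵥ a)
    refine ⟨_, ⟨h, rfl⟩, _, ⟨a - h, rfl⟩, ?_⟩
    rw [← Sum.elim_add_add, Sum.elim_eq_iff, mulVec_sub]
    rw [sub_mulVec] at hh
    exact ⟨by abel, by linear_combination -hh⟩

end CommRing

theorem isUnit_iff_injective_and_surjective_mulVec {K : Type*} [Field K] [DecidableEq n]
    (A : Matrix n n K) : IsUnit A ↔ Function.Injective A.mulVec ∧ Function.Surjective A.mulVec :=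
  ⟨fun hA ↦ ⟨mulVec_injective_iff_isUnit.2 hA, mulVec_surjective_iff_isUnit.2 hA⟩,
    fun hA ↦ mulVec_surjective_iff_isUnit.1 hA.2⟩

/-- `X` and `Z` form a complete pair of right solvents iff the subspaces
`ℳ₁ = {(h, X·h)}` and `ℳ₂ = {(h, Z·h)}` are invariant under the companion matrix
`𝒞₁ = fromBlocks 0 1 (−C) (−B)` and `ℂ^{2n} = ℳ₁ ⊕ ℳ₂`. -/
theorem complete_pair_iff_direct_sum (n : ℕ) (B C X Z : Matrix (Fin n) (Fin n) ℂ)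
    (M₁ M₂ : Set (Fin n ⊕ Fin n → ℂ))
    (hM₁ : M₁ = {v : Fin n ⊕ Fin n → ℂ | ∃ h : Fin n → ℂ, v = Sum.elim h (X.mulVec h)})
    (hM₂ : M₂ = {v : Fin n ⊕ Fin n → ℂ | ∃ h : Fin n → ℂ, v = Sum.elim h (Z.mulVec h)}) :
    (X ^ 2 + B * X + C = 0 ∧ Z ^ 2 + B * Z + C = 0 ∧ IsUnit (X - Z)) ↔
      ((∀ v ∈ M₁, (Matrix.fromBlocks 0 1 (-C) (-B)).mulVec v ∈ M₁) ∧
        (∀ v ∈ M₂, (Matrix.fromBlocks 0 1 (-C) (-B)).mulVec v ∈ M₂) ∧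
        (∀ v, v ∈ M₁ → v ∈ M₂ → v = 0) ∧
        (∀ v : Fin n ⊕ Fin n → ℂ, ∃ v₁ ∈ M₁, ∃ v₂ ∈ M₂, v = v₁ + v₂)) := by
  change M₁ = mulVecGraph X at hM₁
  change M₂ = mulVecGraph Z at hM₂
  subst hM₁ hM₂
  rw [companion_mapsTo_mulVecGraph_iff, companion_mapsTo_mulVecGraph_iff,
    mulVecGraph_inter_trivial_iff, mulVecGraph_add_eq_univ_iff,
    isUnit_iff_injective_and_surjective_mulVec]
end
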